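/- arXiv:quant-ph/0509122 — 2 statements merged into one kernel-verified Lean document; each statement's English description precedes it below -/
import Mathlib

section
/- Let S = {ρ_1,...,ρ_m} be an ensemble with prior probabilities p(i), and let P and P̃ be POVMs each with n operators. Define Q = {λΠ_i + (1−λ)Π̃_i : i = 1,...,n} for λ ∈ [0,1]. Then the mutual information satisfies I(S,Q) ≤ λ I(S,P) + (1−λ) I(S,P̃). -/
open scoped ComplexOrder

/-- `H(u) = u·log₂ u`. -/
noncomputable def H (u : ℝ) : ℝ := u * Real.logb 2 u

/-- Mutual information of an ensemble `(p, ρ)` and a POVM `P`. -/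
noncomputable def mutualInfo {d m : ℕ} {ι : Type*} [Fintype ι]
    (p : Fin m → ℝ) (ρ : Fin m → Matrix (Fin d) (Fin d) ℂ)
    (P : ι → Matrix (Fin d) (Fin d) ℂ) : ℝ :=
  (∑ i, ∑ j, H (p i * ((P j * ρ i).trace).re))
    - (∑ i, H (∑ j, p i * ((P j * ρ i).trace).re))
    - (∑ j, H (∑ i, p i * ((P j * ρ i).trace).re))

/-- `F a b = a log a - a log b` (natural log version of `a log(a/b)`). -/
noncomputable def Faux (a b : ℝ) : ℝ := a * Real.log a - a * Real.log b

lemma Faux_scale {c t k : ℝ} (hc : 0 ≤ c) (hct : c ≤ t) (hk : 0 ≤ k) :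
    Faux (k * c) (k * t) = k * Faux c t := by
  rcases eq_or_lt_of_le hk with rfl | hk
  · simp [Faux]
  rcases eq_or_lt_of_le hc with rfl | hc
  · simp [Faux]
  have ht : 0 < t := lt_of_lt_of_le hc hct
  rw [Faux, Faux, Real.log_mul (ne_of_gt hk) (ne_of_gt hc),
    Real.log_mul (ne_of_gt hk) (ne_of_gt ht)]
  ring

lemma Faux_persp {z u : ℝ} (hz : 0 ≤ z) (hu : 0 < u) :
    u * ((z / u) * Real.log (z / u)) = Faux z u := by
  rcases eq_or_lt_of_le hz with rfl | hz
  · simp [Faux]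
  rw [Real.log_div (ne_of_gt hz) (ne_of_gt hu), Faux]
  field_simp

lemma Faux_key {a s c t l : ℝ} (ha : 0 ≤ a) (has : a ≤ s) (hc : 0 ≤ c) (hct : c ≤ t)
    (hl0 : 0 ≤ l) (hl1 : l ≤ 1) :
    Faux (l * a + (1 - l) * c) (l * s + (1 - l) * t)
      ≤ l * Faux a s + (1 - l) * Faux c t := by
  have hs : 0 ≤ s := le_trans ha has
  have ht : 0 ≤ t := le_trans hc hct
  have hl1' : 0 ≤ 1 - l := by linarith
  rcases eq_or_lt_of_le hs with rfl | hs
  · have ha0 : a = 0 := le_antisymm has ha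
    subst ha0
    simp only [mul_zero, zero_add, Faux_scale hc hct hl1']
    simp [Faux]
  rcases eq_or_lt_of_le ht with rfl | ht
  · have hc0 : c = 0 := le_antisymm hct hc
    subst hc0
    simp only [mul_zero, add_zero, Faux_scale ha has hl0]
    simp [Faux]
  -- main case : s > 0, t > 0
  have hu : 0 < l * s + (1 - l) * t := by
    rcases eq_or_lt_of_le hl0 with rfl | hl
    · simpa using ht
    · have : 0 < l * s := mul_pos hl hs
      nlinarith [mul_nonneg hl1' ht.le]
  set u := l * s + (1 - l) * t with hu_def
  have hconv := Real.convexOn_mul_log.2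
    (Set.mem_Ici.mpr (div_nonneg ha hs.le)) (Set.mem_Ici.mpr (div_nonneg hc ht.le))
    (div_nonneg (mul_nonneg hl0 hs.le) hu.le)
    (div_nonneg (mul_nonneg hl1' ht.le) hu.le)
    (show l * s / u + (1 - l) * t / u = 1 by field_simp; exact hu_def.symm)
  simp only [smul_eq_mul] at hconv
  have harg : l * s / u * (a / s) + (1 - l) * t / u * (c / t)
      = (l * a + (1 - l) * c) / u := by
    field_simp
  rw [harg] at hconv
  have hmul := mul_le_mul_of_nonneg_left hconv hu.le
  rw [Faux_persp (by positivity) hu] at hmul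
  calc Faux (l * a + (1 - l) * c) u
      ≤ u * (l * s / u * (a / s * Real.log (a / s)) + (1 - l) * t / u * (c / t * Real.log (c / t))) := hmul
    _ = l * (s * ((a / s) * Real.log (a / s))) + (1 - l) * (t * ((c / t) * Real.log (c / t))) := by
        field_simp
    _ = l * Faux a s + (1 - l) * Faux c t := by
        rw [Faux_persp ha hs, Faux_persp hc ht]

lemma H_aux_eq (u b : ℝ) : H u - u * Real.logb 2 b = (Real.log 2)⁻¹ * Faux u b := by
  unfold H Faux Real.logb; ring

lemma H_key {a s c t l : ℝ} (ha : 0 ≤ a) (has : a ≤ s) (hc : 0 ≤ c) (hct : c ≤ t)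
    (hl0 : 0 ≤ l) (hl1 : l ≤ 1) :
    H (l * a + (1 - l) * c) - (l * a + (1 - l) * c) * Real.logb 2 (l * s + (1 - l) * t)
      ≤ l * (H a - a * Real.logb 2 s) + (1 - l) * (H c - c * Real.logb 2 t) := by
  rw [H_aux_eq, H_aux_eq, H_aux_eq]
  have h2 : (0:ℝ) ≤ (Real.log 2)⁻¹ := by positivity
  nlinarith [Faux_key ha has hc hct hl0 hl1,
    mul_le_mul_of_nonneg_left (Faux_key ha has hc hct hl0 hl1) h2]

lemma H_vec {m : ℕ} (x y : Fin m → ℝ) (hx : ∀ i, 0 ≤ x i) (hy : ∀ i, 0 ≤ y i)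
    {l : ℝ} (hl0 : 0 ≤ l) (hl1 : l ≤ 1) :
    (∑ i, H (l * x i + (1 - l) * y i)) - H (∑ i, (l * x i + (1 - l) * y i))
      ≤ l * ((∑ i, H (x i)) - H (∑ i, x i))
        + (1 - l) * ((∑ i, H (y i)) - H (∑ i, y i)) := by
  have hu : ∑ i, (l * x i + (1 - l) * y i) = l * (∑ i, x i) + (1 - l) * (∑ i, y i) := by
    rw [Finset.sum_add_distrib, ← Finset.mul_sum, ← Finset.mul_sum]
  have expand : ∀ w : Fin m → ℝ, H (∑ i, w i) = ∑ i, w i * Real.logb 2 (∑ j, w j) :=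
    fun w => Finset.sum_mul _ _ _
  have hsum := Finset.sum_le_sum (s := Finset.univ) (fun i _ =>
    H_key (hx i) (Finset.single_le_sum (fun j _ => hx j) (Finset.mem_univ i))
      (hy i) (Finset.single_le_sum (fun j _ => hy j) (Finset.mem_univ i)) hl0 hl1)
  simp only [Finset.sum_add_distrib, Finset.sum_sub_distrib, ← Finset.mul_sum] at hsum
  rw [expand, expand, expand, hu]
  exact hsum

lemma trace_re_nonneg {d : ℕ} {M : Matrix (Fin d) (Fin d) ℂ} (hM : M.PosSemidef) :
    0 ≤ M.trace.re := by
  have h : ∀ i, 0 ≤ (M i i).re := fun i => by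
    have := hM.re_dotProduct_nonneg (Pi.single i 1)
    simpa [dotProduct, Matrix.mulVec, Pi.single_apply, Finset.mul_sum] using this
  rw [Matrix.trace, Complex.re_sum]
  exact Finset.sum_nonneg fun i _ => h i

lemma trace_mul_re_nonneg {d : ℕ} {A B : Matrix (Fin d) (Fin d) ℂ}
    (hA : A.PosSemidef) (hB : B.PosSemidef) : 0 ≤ ((A * B).trace).re := by
  obtain ⟨X, rfl⟩ : ∃ X : Matrix (Fin d) (Fin d) ℂ, A = X.conjTranspose * X := by
    open scoped MatrixOrder in
    obtain ⟨X, hX⟩ := CStarAlgebra.nonneg_iff_eq_star_mul_self.mp hA.nonneg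
    exact ⟨X, hX⟩
  have h2 : (X.conjTranspose * X * B).trace = (X * B * X.conjTranspose).trace := by
    rw [mul_assoc, Matrix.trace_mul_comm]
  rw [h2]
  exact trace_re_nonneg (hB.mul_mul_conjTranspose_same X)

lemma mutual_convex {m n : ℕ} (xP xPt : Fin n → Fin m → ℝ)
    (hxP : ∀ j i, 0 ≤ xP j i) (hxPt : ∀ j i, 0 ≤ xPt j i) (r : Fin m → ℝ)
    (hrowP : ∀ i, ∑ j, xP j i = r i) (hrowPt : ∀ i, ∑ j, xPt j i = r i)
    {l : ℝ} (hl0 : 0 ≤ l) (hl1 : l ≤ 1) :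
    (∑ i, ∑ j, H (l * xP j i + (1 - l) * xPt j i))
      - (∑ i, H (∑ j, (l * xP j i + (1 - l) * xPt j i)))
      - (∑ j, H (∑ i, (l * xP j i + (1 - l) * xPt j i)))
    ≤ l * ((∑ i, ∑ j, H (xP j i)) - (∑ i, H (∑ j, xP j i)) - (∑ j, H (∑ i, xP j i)))
      + (1 - l) * ((∑ i, ∑ j, H (xPt j i)) - (∑ i, H (∑ j, xPt j i))
          - (∑ j, H (∑ i, xPt j i))) := by
  have hrowZ : ∀ i, ∑ j, (l * xP j i + (1 - l) * xPt j i) = r i := fun i => by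
    rw [Finset.sum_add_distrib, ← Finset.mul_sum, ← Finset.mul_sum, hrowP, hrowPt]; ring
  have key := Finset.sum_le_sum (s := Finset.univ) fun j _ =>
    H_vec (fun i => xP j i) (fun i => xPt j i) (hxP j) (hxPt j) hl0 hl1
  simp only [Finset.sum_sub_distrib, Finset.sum_add_distrib, ← Finset.mul_sum] at key
  simp only [hrowZ, hrowP, hrowPt]
  have e4 : (∑ j, H (∑ i, (l * xP j i + (1 - l) * xPt j i)))
      = ∑ j, H (l * (∑ i, xP j i) + (1 - l) * (∑ i, xPt j i)) := by
    refine Finset.sum_congr rfl fun j _ => ?_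
    rw [Finset.sum_add_distrib, ← Finset.mul_sum, ← Finset.mul_sum]
  rw [e4]
  have e1 : ∑ i, ∑ j, H (l * xP j i + (1 - l) * xPt j i)
      = ∑ j, ∑ i, H (l * xP j i + (1 - l) * xPt j i) := Finset.sum_comm
  have e2 : (∑ i : Fin m, ∑ j : Fin n, H (xP j i)) = ∑ j, ∑ i, H (xP j i) :=
    Finset.sum_comm
  have e3 : (∑ i : Fin m, ∑ j : Fin n, H (xPt j i)) = ∑ j, ∑ i, H (xPt j i) :=
    Finset.sum_comm
  nlinarith [key, e1, e2, e3]

/-- Lemma 9 (convexity of mutual information): for POVMs `P`, `P̃` with `n`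
operators each and `Q = {λΠᵢ + (1−λ)Π̃ᵢ}`, we have
`I(S,Q) ≤ λ I(S,P) + (1−λ) I(S,P̃)`. -/
theorem stmt10 (d m n : ℕ)
    (p : Fin m → ℝ) (hp : ∀ i, 0 ≤ p i) (hp1 : ∑ i, p i = 1)
    (ρ : Fin m → Matrix (Fin d) (Fin d) ℂ)
    (hρ : ∀ i, (ρ i).PosSemidef ∧ (ρ i).trace = 1)
    (P Pt : Fin n → Matrix (Fin d) (Fin d) ℂ)
    (hP : ∀ j, (P j).PosSemidef) (hPsum : ∑ j, P j = 1)
    (hPt : ∀ j, (Pt j).PosSemidef) (hPtsum : ∑ j, Pt j = 1)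
    (l : ℝ) (hl : l ∈ Set.Icc (0:ℝ) 1) :
    mutualInfo p ρ (fun j => l • P j + (1 - l) • Pt j)
      ≤ l * mutualInfo p ρ P + (1 - l) * mutualInfo p ρ Pt := by
  obtain ⟨hl0, hl1⟩ := hl
  have hqP : ∀ (j : Fin n) (i : Fin m), 0 ≤ p i * ((P j * ρ i).trace).re := fun j i =>
    mul_nonneg (hp i) (trace_mul_re_nonneg (hP j) (hρ i).1)
  have hqPt : ∀ (j : Fin n) (i : Fin m), 0 ≤ p i * ((Pt j * ρ i).trace).re := fun j i =>
    mul_nonneg (hp i) (trace_mul_re_nonneg (hPt j) (hρ i).1)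
  have aff : ∀ (j : Fin n) (i : Fin m),
      p i * (((l • P j + (1 - l) • Pt j) * ρ i).trace).re
        = l * (p i * ((P j * ρ i).trace).re) + (1 - l) * (p i * ((Pt j * ρ i).trace).re) := by
    intro j i
    rw [Matrix.add_mul, Matrix.smul_mul, Matrix.smul_mul, Matrix.trace_add,
      Matrix.trace_smul, Matrix.trace_smul]
    simp only [Complex.add_re, Complex.real_smul, Complex.mul_re, Complex.ofReal_re,
      Complex.ofReal_im]
    ring
  have rowP : ∀ i, ∑ j, p i * ((P j * ρ i).trace).re = p i := fun i => by
    rw [← Finset.mul_sum, ← Complex.re_sum, ← Matrix.trace_sum, ← Finset.sum_mul,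
      hPsum, one_mul, (hρ i).2]
    simp
  have rowPt : ∀ i, ∑ j, p i * ((Pt j * ρ i).trace).re = p i := fun i => by
    rw [← Finset.mul_sum, ← Complex.re_sum, ← Matrix.trace_sum, ← Finset.sum_mul,
      hPtsum, one_mul, (hρ i).2]
    simp
  unfold mutualInfo
  simp only [aff]
  exact mutual_convex (fun j i => p i * ((P j * ρ i).trace).re)
    (fun j i => p i * ((Pt j * ρ i).trace).re) hqP hqPt p rowP rowPt hl0 hl1
end

section
/- For the lifted trines ensemble with parameter α ∈ [0,1] and rotation R by 120 degrees about the first axis, the orbit sum of Π = |Ψ(a,b)⟩⟨Ψ(a,b)| satisfies ∑_{i=0}^{2} R^i Π R^{-i} = diag(3cos²(a), (3/2)(1−cos²(a)), (3/2)(1−cos²(a))). Consequently, for orbits generated by parameters (a,b) and (c,d), the combination λ·C₁ + (1−λ)·C₂ of the two orbits sums to the identity I₃ if and only if λcos²(a) + (1−λ)cos²(c) = 1/3. -/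
/-!
The rotation `R` is orthogonal, so `Rⁱ Π R⁻ⁱ = |Rⁱ Ψ⟩⟨Rⁱ Ψ|` and the orbit sum is the sum of
the outer products of the three rotated vectors. These keep the first coordinate `x` and
rotate `(y, z)` by `0°, 120°, 240°`, so the cross terms cancel and the squares of the last two
coordinates average out: the orbit sum of `vvᵀ` is `diag(3x², 3(y²+z²)/2, 3(y²+z²)/2)`.
For `Ψ(a,b)` this only depends on `t = cos² a`, affinely, so the weighted sum of two orbits is
the same diagonal matrix at `t = λ cos² a + (1 - λ) cos² c`, which is `I₃` iff `3t = 1`.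
-/

open Real Matrix

noncomputable def trineRotation : Matrix (Fin 3) (Fin 3) ℝ :=
  !![1, 0, 0; 0, -(1/2), √3 / 2; 0, -(√3 / 2), -(1/2)]

lemma trineRotation_mul_transpose : trineRotation * trineRotationᵀ = 1 := by
  have h3 : √3 ^ 2 = 3 := sq_sqrt (by norm_num)
  ext i j
  fin_cases i <;> fin_cases j <;>
    simp only [trineRotation, mul_apply, Fin.sum_univ_three, transpose_apply, of_apply, cons_val',
      cons_val_fin_one, cons_val_zero, cons_val_one, cons_val, one_apply, Fin.zero_eta, Fin.mk_one,
      Fin.reduceFinMk] <;>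
    grind

lemma trineRotation_inv : trineRotation⁻¹ = trineRotationᵀ :=
  inv_eq_right_inv trineRotation_mul_transpose

lemma trineRotation_mulVec (x y z : ℝ) :
    trineRotation *ᵥ ![x, y, z] = ![x, -(y / 2) + √3 / 2 * z, -(√3 / 2 * y) - z / 2] := by
  ext i
  fin_cases i <;>
    simp only [trineRotation, mulVec, dotProduct, Fin.sum_univ_three, of_apply, cons_val',
      cons_val_fin_one, cons_val_zero, cons_val_one, cons_val, Fin.zero_eta, Fin.mk_one,
      Fin.reduceFinMk] <;>
    ring

lemma trineRotation_sq_mulVec (x y z : ℝ) :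
    trineRotation ^ 2 *ᵥ ![x, y, z] = ![x, -(y / 2) - √3 / 2 * z, √3 / 2 * y - z / 2] := by
  have h3 : √3 ^ 2 = 3 := sq_sqrt (by norm_num)
  rw [sq, ← mulVec_mulVec, trineRotation_mulVec, trineRotation_mulVec]
  ext i
  fin_cases i <;>
    simp only [cons_val_zero, cons_val_one, cons_val, Fin.zero_eta, Fin.mk_one, Fin.reduceFinMk] <;>
    grind

lemma mul_vecMulVec_mul_transpose {m n α : Type*} [Fintype n] [CommSemiring α]
    (A : Matrix m n α) (v : n → α) :
    A * vecMulVec v v * Aᵀ = vecMulVec (A *ᵥ v) (A *ᵥ v) := by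
  rw [mul_vecMulVec, vecMulVec_mul, vecMul_transpose]

lemma sum_vecMulVec_trineRotation_pow_mulVec (x y z : ℝ) :
    ∑ i : Fin 3, vecMulVec (trineRotation ^ (i : ℕ) *ᵥ ![x, y, z])
        (trineRotation ^ (i : ℕ) *ᵥ ![x, y, z])
      = diagonal ![3 * x ^ 2, 3 / 2 * (y ^ 2 + z ^ 2), 3 / 2 * (y ^ 2 + z ^ 2)] := by
  have h3 : √3 ^ 2 = 3 := sq_sqrt (by norm_num)
  simp only [Fin.sum_univ_three, Fin.val_zero, Fin.val_one, Fin.val_two, pow_zero, pow_one,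
    one_mulVec, trineRotation_mulVec, trineRotation_sq_mulVec]
  ext i j
  fin_cases i <;> fin_cases j <;>
    simp only [Matrix.add_apply, vecMulVec_apply, diagonal_apply, cons_val_zero, cons_val_one,
      cons_val, Fin.zero_eta, Fin.mk_one, Fin.reduceFinMk, Fin.reduceEq, if_true, if_false] <;>
    grind

noncomputable def trineOrbitDiagonal (t : ℝ) : Matrix (Fin 3) (Fin 3) ℝ :=
  diagonal ![3 * t, 3 / 2 * (1 - t), 3 / 2 * (1 - t)]

lemma smul_add_smul_trineOrbitDiagonal (l s t : ℝ) :
    l • trineOrbitDiagonal s + (1 - l) • trineOrbitDiagonal t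
      = trineOrbitDiagonal (l * s + (1 - l) * t) := by
  rw [trineOrbitDiagonal, trineOrbitDiagonal, trineOrbitDiagonal, ← diagonal_smul,
    ← diagonal_smul, diagonal_add]
  congr 1
  ext i
  fin_cases i <;>
    simp only [Pi.smul_apply, smul_eq_mul, cons_val_zero, cons_val_one, cons_val, Fin.zero_eta,
      Fin.mk_one, Fin.reduceFinMk] <;>
    ring

lemma trineOrbitDiagonal_eq_one_iff (t : ℝ) : trineOrbitDiagonal t = 1 ↔ t = 1 / 3 := by
  rw [trineOrbitDiagonal, ← diagonal_one, diagonal_injective.eq_iff]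
  constructor
  · intro h
    have h0 := congrFun h 0
    simp only [cons_val_zero] at h0
    linarith
  · rintro rfl
    ext i
    fin_cases i <;> norm_num

lemma sum_trineRotation_pow_mul_vecMulVec_mul_inv_pow (a b : ℝ) :
    ∑ i : Fin 3, trineRotation ^ (i : ℕ) *
        vecMulVec ![cos a, sin a * cos b, sin a * sin b] ![cos a, sin a * cos b, sin a * sin b] *
        trineRotation⁻¹ ^ (i : ℕ)
      = trineOrbitDiagonal (cos a ^ 2) := by
  simp only [trineRotation_inv, ← transpose_pow, mul_vecMulVec_mul_transpose,
    sum_vecMulVec_trineRotation_pow_mulVec]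
  have hyz : (sin a * cos b) ^ 2 + (sin a * sin b) ^ 2 = 1 - cos a ^ 2 := by
    linear_combination sin a ^ 2 * sin_sq_add_cos_sq b + sin_sq_add_cos_sq a
  rw [hyz, trineOrbitDiagonal]

/-- Orbit-sum computation for the lifted trines: the orbit sum of
`Π = |Ψ(a,b)⟩⟨Ψ(a,b)|` under the rotation `R` by 120° is
`diag(3cos²a, (3/2)(1−cos²a), (3/2)(1−cos²a))`; consequently the combination
`λC₁ + (1−λ)C₂` of two orbits sums to `I₃` iff
`λcos²a + (1−λ)cos²c = 1/3`. -/
theorem stmt17 (R : Matrix (Fin 3) (Fin 3) ℝ)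
    (hR : R = !![1, 0, 0; 0, -(1/2), Real.sqrt 3 / 2; 0, -(Real.sqrt 3 / 2), -(1/2)])
    (Ψ : ℝ → ℝ → Fin 3 → ℝ)
    (hΨ : ∀ a b, Ψ a b = ![Real.cos a, Real.sin a * Real.cos b,
      Real.sin a * Real.sin b]) :
    (∀ a b : ℝ,
      ∑ i : Fin 3, R ^ (i : ℕ) * Matrix.vecMulVec (Ψ a b) (Ψ a b) * (R⁻¹) ^ (i : ℕ)
        = Matrix.diagonal ![3 * Real.cos a ^ 2,
            3 / 2 * (1 - Real.cos a ^ 2), 3 / 2 * (1 - Real.cos a ^ 2)]) ∧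
    (∀ (a b c e l : ℝ), l ∈ Set.Icc (0:ℝ) 1 →
      ((∑ i : Fin 3,
          l • (R ^ (i : ℕ) * Matrix.vecMulVec (Ψ a b) (Ψ a b) * (R⁻¹) ^ (i : ℕ)))
        + (∑ i : Fin 3,
          (1 - l) • (R ^ (i : ℕ) * Matrix.vecMulVec (Ψ c e) (Ψ c e) * (R⁻¹) ^ (i : ℕ)))
        = 1
        ↔ l * Real.cos a ^ 2 + (1 - l) * Real.cos c ^ 2 = 1 / 3)) := by
  obtain rfl : R = trineRotation := hR
  simp only [hΨ]
  refine ⟨sum_trineRotation_pow_mul_vecMulVec_mul_inv_pow, fun a b c e l _ => ?_⟩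
  rw [← Finset.smul_sum, ← Finset.smul_sum, sum_trineRotation_pow_mul_vecMulVec_mul_inv_pow,
    sum_trineRotation_pow_mul_vecMulVec_mul_inv_pow, smul_add_smul_trineOrbitDiagonal,
    trineOrbitDiagonal_eq_one_iff]
end
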